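/- (Key lower bound for the second Picard iterate, estimate for J₁.) Let E := {ξ ∈ ℝ³ : 1/10 ≤ ξ₁ ≤ 1/5 and 1/2 ≤ |ξ| ≤ 1}. There exist a constant c > 0 and N₀ ∈ ℕ such that for every integer N ≥ N₀, every δ > 0, for t := 2^{−2N} and every ξ ∈ E, one has (2δ²/N) · (1 − ξ₁²/|ξ|²) · ξ₁ · ∑_{j=N}^{⌊3N/2⌋+1} 2^{2j} ∫₀^t e^{−(t−τ)|ξ|²} ∫_{ℝ³} e^{−τ(|ξ−η|² + |η|²)} · ( −(ξ₂ − η₂)η₂ / (|ξ − η| |η|) ) · χ_j^+(ξ − η) χ_j^−(η) dη dτ ≥ c δ². -/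

import Mathlib

/-!
On the support of `χ_j^+(ξ - η) χ_j^-(η)` the vectors `ξ - η` and `η` lie in unit cubes around
`±2^j e₂`, so for `2^j ≥ 4` the angular factor is at least `1/4` and `|ξ - η|² + |η|² ≤ 8·4^j`.
The two cubes overlap in a cube of side `1` centred at `ξ/2 - 2^j e₂`, hence the `η`-integral is at
least `e^{-8·4^j τ}/4`. Integrating in `τ` over `(0, t]` with `4^j t ≥ 1` and `t|ξ|² ≤ 1` bounds
each of the at least `N/2` summands from below by `e^{-1}(1 - e^{-8})/32`, and on `E` the prefactor
`(1 - ξ₁²/|ξ|²) ξ₁` is at least `21/250`, which absorbs the `1/N`.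
-/

open MeasureTheory ENNReal Real Filter
open scoped RealInnerProductSpace

noncomputable section

/-- Physical/frequency space ℝ³ with the Euclidean norm. -/
abbrev R3 := EuclideanSpace ℝ (Fin 3)

/-- Vector values ℂ⁶ = ℂ³ × ℂ³ (velocity and micro-rotation components). -/
abbrev C6 := (Fin 3 ⊕ Fin 3) → ℂ
/-- Indicator of the cube {|ξ₁| ≤ 1, |ξ₂ − 2^j| ≤ 1, |ξ₃| ≤ 1} (i.e. χ_j^+). -/
def chiP (j : ℕ) (ξ : R3) : ℝ :=
  if |ξ 0| ≤ 1 ∧ |ξ 1 - 2 ^ j| ≤ 1 ∧ |ξ 2| ≤ 1 then 1 else 0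
/-- Indicator of the cube {|ξ₁| ≤ 1, |ξ₂ + 2^j| ≤ 1, |ξ₃| ≤ 1} (i.e. χ_j^−). -/
def chiM (j : ℕ) (ξ : R3) : ℝ :=
  if |ξ 0| ≤ 1 ∧ |ξ 1 + 2 ^ j| ≤ 1 ∧ |ξ 2| ≤ 1 then 1 else 0

/-- The set E on which the lower bound holds. -/
def Eset : Set R3 :=
  {ξ : R3 | 1 / 10 ≤ ξ 0 ∧ ξ 0 ≤ 1 / 5 ∧ 1 / 2 ≤ ‖ξ‖ ∧ ‖ξ‖ ≤ 1}

section Cube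

variable {ι : Type*} [Fintype ι]

def cube (c : EuclideanSpace ℝ ι) (r : ℝ) : Set (EuclideanSpace ℝ ι) :=
  {x | ∀ i, |x i - c i| ≤ r}

lemma cube_eq_preimage_closedBall (c : EuclideanSpace ℝ ι) {r : ℝ} (hr : 0 ≤ r) :
    cube c r = (MeasurableEquiv.toLp 2 (ι → ℝ)).symm ⁻¹' Metric.closedBall c.ofLp r := by
  ext x
  simp [cube, dist_pi_le_iff hr, Real.dist_eq]

lemma measurableSet_cube (c : EuclideanSpace ℝ ι) (r : ℝ) : MeasurableSet (cube c r) := by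
  simp only [cube, Set.ofPred_forall]
  exact MeasurableSet.iInter fun i => measurableSet_le (by fun_prop) measurable_const

lemma volume_cube (c : EuclideanSpace ℝ ι) {r : ℝ} (hr : 0 ≤ r) :
    volume (cube c r) = ENNReal.ofReal ((2 * r) ^ Fintype.card ι) := by
  rw [cube_eq_preimage_closedBall c hr,
    (EuclideanSpace.volume_preserving_symm_measurableEquiv_toLp ι).measure_preimage
      measurableSet_closedBall.nullMeasurableSet, Real.volume_pi_closedBall _ hr]

lemma norm_sub_sq_le_of_mem_cube {c x : EuclideanSpace ℝ ι} {r : ℝ} (hx : x ∈ cube c r) :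
    ‖x - c‖ ^ 2 ≤ Fintype.card ι * r ^ 2 := by
  calc ‖x - c‖ ^ 2 = ∑ i, |x i - c i| ^ 2 := by simp [EuclideanSpace.real_norm_sq_eq]
    _ ≤ ∑ _i : ι, r ^ 2 := Finset.sum_le_sum fun i _ => pow_le_pow_left₀ (abs_nonneg _) (hx i) 2
    _ = Fintype.card ι * r ^ 2 := by simp

end Cube

lemma apply_one_mem_Icc_of_mem_cube {a : ℝ} {u : R3} (hu : u ∈ cube (EuclideanSpace.single 1 a) 1) :
    u 1 ∈ Set.Icc (a - 1) (a + 1) := by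
  have h := hu 1
  simp only [PiLp.single_apply, if_true] at h
  constructor <;> linarith [abs_le.1 h]

lemma norm_le_abs_add_two_of_mem_cube {a : ℝ} {u : R3}
    (hu : u ∈ cube (EuclideanSpace.single 1 a) 1) : ‖u‖ ≤ |a| + 2 := by
  have hsq : ‖u - EuclideanSpace.single 1 a‖ ^ 2 ≤ 3 := by
    simpa using norm_sub_sq_le_of_mem_cube hu
  have hdist : ‖u - EuclideanSpace.single 1 a‖ ≤ 2 := by
    nlinarith [norm_nonneg (u - EuclideanSpace.single 1 a)]
  calc ‖u‖ ≤ ‖EuclideanSpace.single 1 a‖ + ‖u - EuclideanSpace.single 1 a‖ :=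
        norm_le_norm_add_norm_sub' u _
    _ ≤ |a| + 2 := by rw [PiLp.norm_single, Real.norm_eq_abs]; linarith

lemma chiP_eq_indicator (j : ℕ) :
    chiP j = (cube (EuclideanSpace.single 1 (2 ^ j : ℝ)) 1).indicator 1 := by
  funext η
  simp [chiP, cube, Set.indicator, Fin.forall_fin_succ]

lemma chiM_eq_indicator (j : ℕ) :
    chiM j = (cube (EuclideanSpace.single 1 (-2 ^ j : ℝ)) 1).indicator 1 := by
  funext η
  simp [chiM, cube, Set.indicator, Fin.forall_fin_succ]

section Antipodal

variable {M : ℝ} {u v : R3}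

lemma norm_le_add_two_of_mem_cube (hM : 0 ≤ M) (hu : u ∈ cube (EuclideanSpace.single 1 M) 1)
    (hv : v ∈ cube (EuclideanSpace.single 1 (-M)) 1) : ‖u‖ ≤ M + 2 ∧ ‖v‖ ≤ M + 2 := by
  have hu_le := norm_le_abs_add_two_of_mem_cube hu
  have hv_le := norm_le_abs_add_two_of_mem_cube hv
  rw [abs_neg, abs_of_nonneg hM] at hv_le
  rw [abs_of_nonneg hM] at hu_le
  exact ⟨hu_le, hv_le⟩

lemma quarter_le_neg_apply_mul_div (hM : 4 ≤ M) (hu : u ∈ cube (EuclideanSpace.single 1 M) 1)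
    (hv : v ∈ cube (EuclideanSpace.single 1 (-M)) 1) :
    1 / 4 ≤ -(u 1 * v 1) / (‖u‖ * ‖v‖) := by
  obtain ⟨hu₁, -⟩ := apply_one_mem_Icc_of_mem_cube hu
  obtain ⟨-, hv₁⟩ := apply_one_mem_Icc_of_mem_cube hv
  obtain ⟨hu_le, hv_le⟩ := norm_le_add_two_of_mem_cube (by linarith) hu hv
  have hu_pos : 0 < ‖u‖ := by linarith [(le_abs_self _).trans (PiLp.norm_apply_le u 1)]
  have hv_pos : 0 < ‖v‖ := by linarith [(neg_le_abs _).trans (PiLp.norm_apply_le v 1)]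
  have hnum : (M - 1) * (M - 1) ≤ u 1 * -v 1 := by
    apply mul_le_mul <;> linarith
  have hden : ‖u‖ * ‖v‖ ≤ (M + 2) * (M + 2) := mul_le_mul hu_le hv_le hv_pos.le (by linarith)
  rw [le_div_iff₀ (mul_pos hu_pos hv_pos)]
  nlinarith

lemma norm_sq_add_norm_sq_le (hM : 2 ≤ M) (hu : u ∈ cube (EuclideanSpace.single 1 M) 1)
    (hv : v ∈ cube (EuclideanSpace.single 1 (-M)) 1) :
    ‖u‖ ^ 2 + ‖v‖ ^ 2 ≤ 8 * M ^ 2 := by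
  obtain ⟨hu_le, hv_le⟩ := norm_le_add_two_of_mem_cube (by linarith) hu hv
  nlinarith [norm_nonneg u, norm_nonneg v]

end Antipodal

def kernel (ξ : R3) (j : ℕ) (τ : ℝ) (η : R3) : ℝ :=
  Real.exp (-τ * (‖ξ - η‖ ^ 2 + ‖η‖ ^ 2)) *
    (-((ξ 1 - η 1) * η 1) / (‖ξ - η‖ * ‖η‖)) * chiP j (ξ - η) * chiM j η

section Kernel

variable (ξ : R3) (j : ℕ)

lemma measurable_uncurry_kernel : Measurable fun p : ℝ × R3 => kernel ξ j p.1 p.2 := by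
  have hP : Measurable (chiP j) := by
    rw [chiP_eq_indicator]; exact measurable_one.indicator (measurableSet_cube _ _)
  have hM : Measurable (chiM j) := by
    rw [chiM_eq_indicator]; exact measurable_one.indicator (measurableSet_cube _ _)
  unfold kernel
  fun_prop

lemma integrable_chiM : Integrable (chiM j) := by
  rw [chiM_eq_indicator, integrable_indicator_iff (measurableSet_cube _ _)]
  exact integrableOn_const (by rw [volume_cube _ zero_le_one]; exact ENNReal.ofReal_ne_top)

lemma abs_kernel_le {τ : ℝ} (hτ : 0 ≤ τ) (η : R3) : |kernel ξ j τ η| ≤ chiM j η := by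
  have hexp : Real.exp (-τ * (‖ξ - η‖ ^ 2 + ‖η‖ ^ 2)) ≤ 1 :=
    Real.exp_le_one_iff.2 (by rw [neg_mul, neg_nonpos]; positivity)
  have hangle : |-((ξ 1 - η 1) * η 1) / (‖ξ - η‖ * ‖η‖)| ≤ 1 := by
    rw [abs_div, abs_neg, abs_mul, abs_of_nonneg (by positivity : 0 ≤ ‖ξ - η‖ * ‖η‖)]
    exact div_le_one_of_le₀ (mul_le_mul (PiLp.norm_apply_le (ξ - η) 1) (PiLp.norm_apply_le η 1)
      (abs_nonneg _) (norm_nonneg _)) (by positivity)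
  have hP : chiP j (ξ - η) ∈ Set.Icc 0 1 := by unfold chiP; split_ifs <;> simp
  have hM : 0 ≤ chiM j η := by unfold chiM; split_ifs <;> simp
  unfold kernel
  rw [abs_mul, abs_mul, abs_mul, abs_of_pos (Real.exp_pos _), abs_of_nonneg hP.1, abs_of_nonneg hM]
  calc _ ≤ 1 * 1 * 1 * chiM j η := by gcongr; exacts [hP.1, hP.2]
    _ = chiM j η := by ring

lemma integrable_kernel {τ : ℝ} (hτ : 0 ≤ τ) : Integrable (kernel ξ j τ) :=
  (integrable_chiM j).mono'
    ((measurable_uncurry_kernel ξ j).comp measurable_prodMk_left).aestronglyMeasurable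
    (ae_of_all _ fun η => (Real.norm_eq_abs _).trans_le (abs_kernel_le ξ j hτ η))

lemma le_kernel (hj : 4 ≤ (2 : ℝ) ^ j) {τ : ℝ} (hτ : 0 ≤ τ) (η : R3) :
    Real.exp (-(8 * ((2 : ℝ) ^ j) ^ 2 * τ)) / 4 * (chiP j (ξ - η) * chiM j η) ≤ kernel ξ j τ η := by
  unfold kernel
  rw [chiP_eq_indicator, chiM_eq_indicator]
  by_cases hu : ξ - η ∈ cube (EuclideanSpace.single 1 (2 ^ j : ℝ)) 1
  · by_cases hv : η ∈ cube (EuclideanSpace.single 1 (-2 ^ j : ℝ)) 1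
    · simp only [Set.indicator_of_mem hu, Set.indicator_of_mem hv, Pi.one_apply, mul_one]
      have hsum := norm_sq_add_norm_sq_le (by linarith) hu hv
      calc Real.exp (-(8 * ((2 : ℝ) ^ j) ^ 2 * τ)) / 4
          ≤ Real.exp (-τ * (‖ξ - η‖ ^ 2 + ‖η‖ ^ 2)) * (1 / 4) := by
            rw [div_eq_mul_one_div]; gcongr; nlinarith
        _ ≤ _ :=
            mul_le_mul_of_nonneg_left (quarter_le_neg_apply_mul_div hj hu hv) (Real.exp_pos _).le
    · simp [Set.indicator_of_notMem hv]
  · simp [Set.indicator_of_notMem hu]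

end Kernel

def cubeOverlap (ξ : R3) (j : ℕ) : Set R3 :=
  (ξ - ·) ⁻¹' cube (EuclideanSpace.single 1 (2 ^ j : ℝ)) 1 ∩
    cube (EuclideanSpace.single 1 (-2 ^ j : ℝ)) 1

section Overlap

variable (ξ : R3) (j : ℕ)

lemma chiP_sub_mul_chiM_eq_indicator :
    (fun η => chiP j (ξ - η) * chiM j η) = (cubeOverlap ξ j).indicator 1 := by
  ext η
  rw [chiP_eq_indicator, chiM_eq_indicator, cubeOverlap, Set.inter_indicator_one]
  rfl

lemma measurableSet_cubeOverlap : MeasurableSet (cubeOverlap ξ j) :=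
  ((measurableSet_cube _ _).preimage (by fun_prop)).inter (measurableSet_cube _ _)

lemma volume_cubeOverlap_ne_top : volume (cubeOverlap ξ j) ≠ ∞ :=
  measure_ne_top_of_subset Set.inter_subset_right
    (by rw [volume_cube _ zero_le_one]; exact ENNReal.ofReal_ne_top)

lemma integrable_chiP_sub_mul_chiM : Integrable fun η => chiP j (ξ - η) * chiM j η := by
  rw [chiP_sub_mul_chiM_eq_indicator, integrable_indicator_iff (measurableSet_cubeOverlap ξ j)]
  exact integrableOn_const (volume_cubeOverlap_ne_top ξ j)

variable {ξ} in
lemma one_le_integral_chiP_sub_mul_chiM (hξ : ∀ i, |ξ i| ≤ 1) :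
    1 ≤ ∫ η, chiP j (ξ - η) * chiM j η := by
  set B := cube ((1 / 2 : ℝ) • ξ - EuclideanSpace.single 1 (2 ^ j : ℝ)) (1 / 2)
  have hB : B ⊆ cubeOverlap ξ j := by
    intro η hη
    refine ⟨fun i => ?_, fun i => ?_⟩ <;> have h := hη i <;> have hi := hξ i <;>
      simp only [PiLp.sub_apply, PiLp.smul_apply, PiLp.single_apply, smul_eq_mul] at h ⊢ <;>
      split_ifs at h ⊢ <;> rw [abs_le] at * <;> constructor <;> linarith
  rw [chiP_sub_mul_chiM_eq_indicator, integral_indicator_one (measurableSet_cubeOverlap ξ j)]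
  calc (1 : ℝ) = volume.real B := by simp [B, measureReal_def, volume_cube]
    _ ≤ _ := measureReal_mono hB (volume_cubeOverlap_ne_top ξ j)

end Overlap

lemma exp_div_four_le_integral_kernel {ξ : R3} (hξ : ∀ i, |ξ i| ≤ 1) {j : ℕ} (hj : 4 ≤ (2 : ℝ) ^ j)
    {τ : ℝ} (hτ : 0 ≤ τ) :
    Real.exp (-(8 * ((2 : ℝ) ^ j) ^ 2 * τ)) / 4 ≤ ∫ η, kernel ξ j τ η :=
  calc Real.exp (-(8 * ((2 : ℝ) ^ j) ^ 2 * τ)) / 4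
      ≤ Real.exp (-(8 * ((2 : ℝ) ^ j) ^ 2 * τ)) / 4 * ∫ η, chiP j (ξ - η) * chiM j η :=
        le_mul_of_one_le_right (by positivity) (one_le_integral_chiP_sub_mul_chiM j hξ)
    _ = ∫ η, Real.exp (-(8 * ((2 : ℝ) ^ j) ^ 2 * τ)) / 4 * (chiP j (ξ - η) * chiM j η) :=
        (integral_const_mul _ _).symm
    _ ≤ ∫ η, kernel ξ j τ η :=
        integral_mono ((integrable_chiP_sub_mul_chiM ξ j).const_mul _) (integrable_kernel ξ j hτ)
          (le_kernel ξ j hj hτ)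

lemma integral_exp_neg_mul_Ioc {k : ℝ} (hk : k ≠ 0) {t : ℝ} (ht : 0 ≤ t) :
    ∫ τ in Set.Ioc 0 t, Real.exp (-(k * τ)) = (1 - Real.exp (-(k * t))) / k := by
  rw [← intervalIntegral.integral_of_le ht]
  simp only [← neg_mul]
  rw [intervalIntegral.integral_comp_mul_left (fun x => Real.exp x) (neg_ne_zero.2 hk),
    integral_exp]
  simp only [mul_zero, Real.exp_zero, smul_eq_mul]
  field_simp
  ring

lemma integrableOn_heat_mul_integral_kernel (ξ : R3) (j : ℕ) (t : ℝ) :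
    IntegrableOn (fun τ => Real.exp (-(t - τ) * ‖ξ‖ ^ 2) * ∫ η, kernel ξ j τ η) (Set.Ioc 0 t) := by
  have hF : StronglyMeasurable fun τ => ∫ η, kernel ξ j τ η :=
    (measurable_uncurry_kernel ξ j).stronglyMeasurable.integral_prod_right'
  refine Measure.integrableOn_of_bounded (M := ∫ η, chiM j η) measure_Ioc_lt_top.ne
    ((Continuous.aestronglyMeasurable (by fun_prop)).mul hF.aestronglyMeasurable) ?_
  rw [ae_restrict_iff' measurableSet_Ioc]
  refine ae_of_all _ fun τ hτ => ?_
  have hexp : Real.exp (-(t - τ) * ‖ξ‖ ^ 2) ≤ 1 := Real.exp_le_one_iff.2 <| by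
    rw [neg_mul, neg_nonpos]; exact mul_nonneg (by linarith [hτ.2]) (by positivity)
  have hint : ‖∫ η, kernel ξ j τ η‖ ≤ ∫ η, chiM j η :=
    norm_integral_le_of_norm_le (integrable_chiM j)
      (ae_of_all _ fun η => (Real.norm_eq_abs _).trans_le (abs_kernel_le ξ j hτ.1.le η))
  rw [norm_mul, Real.norm_of_nonneg (Real.exp_pos _).le]
  exact (mul_le_of_le_one_left (norm_nonneg _) hexp).trans hint

lemma le_two_pow_mul_setIntegral_heat {ξ : R3} (hξ : ‖ξ‖ ≤ 1) {j : ℕ} (hj : 4 ≤ (2 : ℝ) ^ j)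
    {t : ℝ} (ht : t ≤ 1) (hjt : 1 ≤ (2 : ℝ) ^ (2 * j) * t) :
    Real.exp (-1) * (1 - Real.exp (-8)) / 32 ≤
      (2 : ℝ) ^ (2 * j) * ∫ τ in Set.Ioc 0 t,
        Real.exp (-(t - τ) * ‖ξ‖ ^ 2) * ∫ η, kernel ξ j τ η := by
  set M : ℝ := 2 ^ j
  have hM : (2 : ℝ) ^ (2 * j) = M ^ 2 := pow_mul' 2 2 j
  rw [hM] at hjt ⊢
  have hξi : ∀ i, |ξ i| ≤ 1 := fun i => (PiLp.norm_apply_le ξ i).trans hξ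
  have ht0 : 0 ≤ t := nonneg_of_mul_nonneg_right (by linarith) (by positivity : 0 < M ^ 2)
  have hpoint : ∀ τ ∈ Set.Ioc 0 t, Real.exp (-1) / 4 * Real.exp (-(8 * M ^ 2 * τ)) ≤
      Real.exp (-(t - τ) * ‖ξ‖ ^ 2) * ∫ η, kernel ξ j τ η := by
    intro τ hτ
    have hexp : Real.exp (-1) ≤ Real.exp (-(t - τ) * ‖ξ‖ ^ 2) := by
      gcongr
      nlinarith [hτ.1, hτ.2, norm_nonneg ξ]
    rw [div_mul_eq_mul_div, mul_div_assoc]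
    exact mul_le_mul hexp (exp_div_four_le_integral_kernel hξi hj hτ.1.le) (by positivity)
      (Real.exp_pos _).le
  have hint := setIntegral_mono_on (Continuous.integrableOn_Ioc (by fun_prop))
    (integrableOn_heat_mul_integral_kernel ξ j t) measurableSet_Ioc hpoint
  rw [integral_const_mul, integral_exp_neg_mul_Ioc (by positivity) ht0] at hint
  have hdecay : Real.exp (-(8 * M ^ 2 * t)) ≤ Real.exp (-8) := by gcongr; linarith
  calc Real.exp (-1) * (1 - Real.exp (-8)) / 32
      ≤ Real.exp (-1) * (1 - Real.exp (-(8 * M ^ 2 * t))) / 32 := by gcongr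
    _ = M ^ 2 * (Real.exp (-1) / 4 * ((1 - Real.exp (-(8 * M ^ 2 * t))) / (8 * M ^ 2))) := by
        field_simp; ring
    _ ≤ _ := by gcongr

lemma half_le_card_Icc (N : ℕ) : (N : ℝ) / 2 ≤ (Finset.Icc N (3 * N / 2 + 1)).card := by
  have h : N ≤ 2 * (Finset.Icc N (3 * N / 2 + 1)).card := by rw [Nat.card_Icc]; omega
  rw [div_le_iff₀ two_pos, mul_comm]
  exact_mod_cast h

lemma le_one_sub_mul_of_mem_Eset {ξ : R3} (hξ : ξ ∈ Eset) :
    21 / 250 ≤ (1 - ξ 0 ^ 2 / ‖ξ‖ ^ 2) * ξ 0 := by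
  obtain ⟨h₀, h₀', hnorm, -⟩ := hξ
  have hratio : ξ 0 ^ 2 / ‖ξ‖ ^ 2 ≤ 4 / 25 := by
    rw [div_le_iff₀ (by nlinarith)]
    nlinarith
  nlinarith

/-- **key lower bound for the second Picard iterate, estimate for J₁.**
There are c > 0 and N₀ ∈ ℕ such that for every integer N ≥ N₀, every δ > 0, with t := 2^{−2N},
for every ξ ∈ E:
(2δ²/N)(1 − ξ₁²/|ξ|²) ξ₁ ∑_{j=N}^{⌊3N/2⌋+1} 2^{2j} ∫₀^t e^{−(t−τ)|ξ|²}
∫ e^{−τ(|ξ−η|²+|η|²)} (−(ξ₂−η₂)η₂/(|ξ−η||η|)) χ_j^+(ξ−η) χ_j^−(η) dη dτ ≥ cδ². -/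
theorem second_iterate_lower_bound :
    ∃ c : ℝ, 0 < c ∧ ∃ N₀ : ℕ, ∀ N : ℕ, N₀ ≤ N → ∀ δ : ℝ, 0 < δ → ∀ ξ ∈ Eset,
      c * δ ^ 2 ≤
        2 * δ ^ 2 / N * (1 - (ξ 0) ^ 2 / ‖ξ‖ ^ 2) * ξ 0 *
          ∑ j ∈ Finset.Icc N (3 * N / 2 + 1), (2 : ℝ) ^ (2 * j) *
            ∫ τ in Set.Ioc (0 : ℝ) ((2 : ℝ) ^ (-(2 * N : ℤ))),
              Real.exp (-((2 : ℝ) ^ (-(2 * N : ℤ)) - τ) * ‖ξ‖ ^ 2) *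
                ∫ η : R3, Real.exp (-τ * (‖ξ - η‖ ^ 2 + ‖η‖ ^ 2)) *
                  (-((ξ 1 - η 1) * η 1) / (‖ξ - η‖ * ‖η‖)) * chiP j (ξ - η) * chiM j η := by
  set c₀ := Real.exp (-1) * (1 - Real.exp (-8)) / 32
  have hc₀ : 0 < c₀ := by
    have : Real.exp (-8) < 1 := Real.exp_lt_one_iff.2 (by norm_num)
    have := Real.exp_pos (-1)
    positivity
  refine ⟨21 / 250 * c₀, by positivity, 2, fun N hN δ hδ ξ hξ => ?_⟩
  have ht : (2 : ℝ) ^ (-(2 * N : ℤ)) ≤ 1 := zpow_le_one_of_nonpos₀ one_le_two (by omega)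
  have hterm : ∀ j ∈ Finset.Icc N (3 * N / 2 + 1), c₀ ≤ (2 : ℝ) ^ (2 * j) *
      ∫ τ in Set.Ioc 0 ((2 : ℝ) ^ (-(2 * N : ℤ))),
        Real.exp (-((2 : ℝ) ^ (-(2 * N : ℤ)) - τ) * ‖ξ‖ ^ 2) * ∫ η, kernel ξ j τ η := by
    intro j hj
    have hjN := (Finset.mem_Icc.1 hj).1
    refine le_two_pow_mul_setIntegral_heat hξ.2.2.2
      ((pow_le_pow_right₀ one_le_two (by omega : 2 ≤ j)).trans_eq' (by norm_num)) ht ?_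
    rw [← zpow_natCast, ← zpow_add₀ two_ne_zero]
    exact one_le_zpow₀ one_le_two (by push_cast; omega)
  have hsum := (mul_le_mul_of_nonneg_right (half_le_card_Icc N) hc₀.le).trans
    (nsmul_eq_mul _ c₀ ▸ Finset.card_nsmul_le_sum _ _ _ hterm)
  have hNpos : (0 : ℝ) < N := by exact_mod_cast (by omega : 0 < N)
  have hprefactor := le_one_sub_mul_of_mem_Eset hξ
  rw [mul_assoc (2 * δ ^ 2 / N)]
  calc 21 / 250 * c₀ * δ ^ 2 = 2 * δ ^ 2 / N * (21 / 250) * (N / 2 * c₀) := by field_simp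
    _ ≤ _ := by gcongr; exact hsum
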